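/- Let A be a noetherian local commutative ring and let (a_0, …, a_r) be a regular sequence in A with r ≥ 1. Fix an index i with 0 ≤ i ≤ r and let B_i = A[S_0, …, Ŝ_i, …, S_r]/(a_i S_j − a_j : j ≠ i) be the i-th standard affine chart of the blow-up of Spec A in the ideal (a_0, …, a_r). Then for every n ≥ 1 the image of a_i^n in B_i is a nonzerodivisor. (Hence the exceptional divisor and each of its infinitesimal thickenings are cut out in this chart by a single regular element.) -/

import Mathlib

/-!
Put `f_j = a_i S_j - a_j` with `S_i = 1`, so that `f_i = 0`. If `a_i w = ∑ g_j f_j`, then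
`c = g - q e_i` with `q = ∑ g_j S_j - w` satisfies `∑ c_j a_j = 0`. Syzygies of a regular sequence
are Koszul, `c_j = ∑_k (u_jk - u_kj) a_k`; substituting `a_k = a_i S_k - f_k`, the antisymmetric
terms `(u_jk - u_kj) f_j f_k` cancel and `a_i w = a_i ∑_j v_j f_j`. Hence `w ∈ (f)` once `a_i` is a
nonzerodivisor of `A[S]`, which holds because a regular sequence in the maximal ideal of a
noetherian local ring stays regular after permutation, and `A[S]` is flat over `A`. If instead
some `a_j` is a unit, then `a_i S_j = a_j` makes `a_i` a unit of `B_i`.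
-/

/-- A list `xs = [x_1, …, x_n]` of elements of a commutative ring `R` is a regular
sequence if for each `k` the image of `x_{k+1}` in `R ⧸ (x_1, …, x_k)` is a
nonzerodivisor. -/
def IsRegularSequence {R : Type*} [CommRing R] (xs : List R) : Prop :=
  ∀ (k : ℕ) (hk : k < xs.length)
    (y : R ⧸ Ideal.span {r | r ∈ xs.take k}),
    Ideal.Quotient.mk (Ideal.span {r | r ∈ xs.take k}) (xs.get ⟨k, hk⟩) * y = 0 → y = 0

open RingTheory.Sequence IsLocalRing

variable {R : Type*} [CommRing R]

theorem isRegularSequence_iff_isWeaklyRegular (xs : List R) :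
    IsRegularSequence xs ↔ IsWeaklyRegular R xs := by
  simp only [IsRegularSequence, isWeaklyRegular_iff, isSMulRegular_quotient_iff_mem_of_smul_mem,
    Ideal.mul_top, smul_eq_mul, Ideal.Quotient.mk_surjective.forall,
    ← map_mul, Ideal.Quotient.eq_zero_iff_mem]
  rfl

namespace RingTheory.Sequence.IsWeaklyRegular

theorem map_algebraMap_of_flat {S : Type*} [CommRing S] [Algebra R S] [Module.Flat R S]
    {rs : List R} (h : IsWeaklyRegular R rs) : IsWeaklyRegular S (rs.map (algebraMap R S)) :=
  (isWeaklyRegular_map_algebraMap_iff S S rs).mpr <|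
    ((TensorProduct.lid R S).isWeaklyRegular_congr rs).mp h.isWeaklyRegular_rTensor

theorem isSMulRegular_of_mem_of_subset_maximalIdeal [IsLocalRing R] [IsNoetherianRing R]
    {rs : List R} (h : IsWeaklyRegular R rs) (hrs : ∀ r ∈ rs, r ∈ maximalIdeal R) {r : R}
    (hr : r ∈ rs) : IsSMulRegular R r := by
  classical
  exact ((isWeaklyRegular_cons_iff R r _).mp
    (isWeaklyRegular_of_perm_of_subset_maximalIdeal h (List.perm_cons_erase hr) hrs)).1

theorem exists_koszul_of_sum_mul_eq_zero {n : ℕ} {x : Fin n → R}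
    (hx : IsWeaklyRegular R (List.ofFn x)) {c : Fin n → R} (hc : ∑ j, c j * x j = 0) :
    ∃ u : Fin n → Fin n → R, ∀ j, c j = ∑ k, (u j k - u k j) * x k := by
  induction n with
  | zero => exact ⟨0, fun j => j.elim0⟩
  | succ n ih =>
    rw [List.ofFn_succ', List.concat_eq_append, isWeaklyRegular_append_iff,
      isWeaklyRegular_singleton_iff, isSMulRegular_quotient_iff_mem_of_smul_mem] at hx
    obtain ⟨hinit, hlast⟩ := hx
    simp only [Ideal.mul_top, Ideal.ofList, List.mem_ofFn', smul_eq_mul,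
      Set.ofPred_mem_eq] at hlast
    rw [Fin.sum_univ_castSucc] at hc
    have hc_last : c (Fin.last n) ∈ Ideal.span (Set.range fun j : Fin n => x j.castSucc) := by
      refine hlast _ ?_
      rw [mul_comm, eq_neg_of_add_eq_zero_right hc]
      exact neg_mem (Ideal.sum_mem _ fun j _ => Ideal.mul_mem_left _ _ (Ideal.subset_span ⟨j, rfl⟩))
    obtain ⟨d, hd⟩ := Ideal.mem_span_range_iff_exists_fun.mp hc_last
    obtain ⟨u, hu⟩ := ih hinit (c := fun j => c j.castSucc + d j * x (Fin.last n)) <| by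
      rw [← hc, ← hd, Finset.sum_mul, ← Finset.sum_add_distrib]
      exact Finset.sum_congr rfl fun j _ => by ring
    refine ⟨Fin.snoc (fun j => Fin.snoc (u j) 0) (Fin.snoc d 0), fun j => ?_⟩
    induction j using Fin.lastCases with
    | last => simp [Fin.sum_univ_castSucc, hd]
    | cast j => simp [Fin.sum_univ_castSucc, ← hu j]

end RingTheory.Sequence.IsWeaklyRegular

theorem sum_sum_sub_swap_mul_mul_eq_zero {ι : Type*} [Fintype ι] (u : ι → ι → R) (f : ι → R) :
    ∑ j, ∑ k, (u j k - u k j) * (f j * f k) = 0 := by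
  simp only [sub_mul, Finset.sum_sub_distrib]
  rw [Finset.sum_comm (f := fun j k => u k j * (f j * f k)), sub_eq_zero]
  exact Finset.sum_congr rfl fun _ _ => Finset.sum_congr rfl fun _ _ => by ring

theorem isSMulRegular_quotient_span_mul_sub {n : ℕ} {x : Fin n → R}
    (hx : IsWeaklyRegular R (List.ofFn x)) {i : Fin n} (hxi : IsSMulRegular R (x i))
    {y : Fin n → R} (hy : y i = 1) :
    IsSMulRegular (R ⧸ Ideal.span (Set.range fun j => x i * y j - x j)) (x i) := by
  set f := fun j => x i * y j - x j
  have hfi : f i = 0 := by simp [f, hy]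
  rw [isSMulRegular_quotient_iff_mem_of_smul_mem]
  intro w hw
  rw [smul_eq_mul] at hw
  obtain ⟨g, hg⟩ := Ideal.mem_span_range_iff_exists_fun.mp hw
  set q := ∑ j, g j * y j - w
  have hc : ∑ j, (g j - (Pi.single i q : Fin n → R) j) * x j = 0 := by
    have hgx : ∑ j, g j * x j = x i * ∑ j, g j * y j - ∑ j, g j * f j := by
      rw [Finset.mul_sum, ← Finset.sum_sub_distrib]
      exact Finset.sum_congr rfl fun j _ => by ring
    simp only [sub_mul, Finset.sum_sub_distrib, Pi.single_apply, ite_mul, zero_mul,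
      Finset.sum_ite_eq', Finset.mem_univ, if_true, hgx, hg, q]
    ring
  obtain ⟨u, hu⟩ := hx.exists_koszul_of_sum_mul_eq_zero hc
  set v := fun j => ∑ k, (u j k - u k j) * y k
  have hw' : x i * w = x i * ∑ j, v j * f j :=
    calc x i * w = ∑ j, (g j - (Pi.single i q : Fin n → R) j) * f j := by
          simp [sub_mul, hfi, hg, Pi.single_apply]
      _ = ∑ j, ∑ k, (u j k - u k j) * (x i * y k - f k) * f j := by
          simp only [hu, Finset.sum_mul, f, sub_sub_cancel]
      _ = x i * ∑ j, v j * f j - ∑ j, ∑ k, (u j k - u k j) * (f j * f k) := by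
          simp only [v, Finset.mul_sum, Finset.sum_mul, ← Finset.sum_sub_distrib]
          exact Finset.sum_congr rfl fun j _ => Finset.sum_congr rfl fun k _ => by ring
      _ = x i * ∑ j, v j * f j := by rw [sum_sum_sub_swap_mul_mul_eq_zero, sub_zero]
  rw [hxi hw']
  exact Ideal.sum_mem _ fun j _ => Ideal.mul_mem_left _ _ (Ideal.subset_span ⟨j, rfl⟩)

theorem isSMulRegular_quotient_span_mul_sub_of_isUnit {ι : Type*} (x y : ι → R) (i : ι) {j : ι}
    (hj : IsUnit (x j)) :
    IsSMulRegular (R ⧸ Ideal.span (Set.range fun k => x i * y k - x k)) (x i) := by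
  rw [← isSMulRegular_algebraMap_iff (R ⧸ Ideal.span (Set.range fun k => x i * y k - x k)),
    Ideal.Quotient.algebraMap_eq]
  refine IsUnit.isSMulRegular _ (isUnit_of_mul_isUnit_left (y := Ideal.Quotient.mk _ (y j)) ?_)
  have hij : x i * y j - x j ∈ Ideal.span (Set.range fun k => x i * y k - x k) :=
    Ideal.subset_span ⟨j, rfl⟩
  rw [← map_mul, (Ideal.Quotient.mk_eq_mk_iff_sub_mem _ _).mpr hij]
  exact hj.map _

theorem isSMulRegular_quotient_span_algebraMap_mul_sub {A S : Type*} [CommRing A] [IsLocalRing A]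
    [IsNoetherianRing A] [CommRing S] [Algebra A S] [Module.Flat A S] {n : ℕ} {a : Fin n → A}
    (ha : IsWeaklyRegular A (List.ofFn a)) (i : Fin n) {y : Fin n → S} (hy : y i = 1) :
    IsSMulRegular
      (S ⧸ Ideal.span (Set.range fun j => algebraMap A S (a i) * y j - algebraMap A S (a j)))
      (algebraMap A S (a i)) := by
  by_cases hu : ∃ j, IsUnit (a j)
  · obtain ⟨j, hj⟩ := hu
    exact isSMulRegular_quotient_span_mul_sub_of_isUnit (fun k => algebraMap A S (a k)) y i
      (hj.map _)
  · push Not at hu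
    have hm : ∀ r ∈ List.ofFn a, r ∈ maximalIdeal A := by
      simpa [List.mem_ofFn] using hu
    refine isSMulRegular_quotient_span_mul_sub (x := fun j => algebraMap A S (a j)) ?_ ?_ hy
    · rw [← Function.comp_def, ← List.map_ofFn]
      exact ha.map_algebraMap_of_flat
    · exact (ha.isSMulRegular_of_mem_of_subset_maximalIdeal hm
        ((List.mem_ofFn' a _).mpr ⟨i, rfl⟩)).of_flat

theorem Ideal.span_range_subtype_ne {ι : Type*} (f : ι → R) {i : ι} (hi : f i = 0) :
    Ideal.span (Set.range fun j : {j // j ≠ i} => f j) = Ideal.span (Set.range f) := by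
  refine le_antisymm (Ideal.span_mono (Set.range_comp_subset_range _ f)) (Ideal.span_le.mpr ?_)
  rintro _ ⟨j, rfl⟩
  by_cases hj : j = i
  · simp [hj, hi]
  · exact Ideal.subset_span ⟨⟨j, hj⟩, rfl⟩

open MvPolynomial in
theorem statement7_general (A : Type) [CommRing A] [IsNoetherianRing A] [IsLocalRing A]
    (r : ℕ) (a : Fin (r + 1) → A)
    (hreg : IsRegularSequence ((List.finRange (r + 1)).map a)) (i : Fin (r + 1))
    (n : ℕ)
    (z : MvPolynomial {j : Fin (r + 1) // j ≠ i} A ⧸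
      Ideal.span (Set.range fun j : {j : Fin (r + 1) // j ≠ i} =>
        C (a i) * X j - C (a j.1)))
    (hz : Ideal.Quotient.mk
        (Ideal.span (Set.range fun j : {j : Fin (r + 1) // j ≠ i} =>
          C (a i) * X j - C (a j.1)))
        (C (a i) ^ n) * z = 0) :
    z = 0 := by
  let y : Fin (r + 1) → MvPolynomial {j : Fin (r + 1) // j ≠ i} A :=
    fun j => if h : j = i then 1 else X ⟨j, h⟩
  have hI : Ideal.span (Set.range fun j : {j : Fin (r + 1) // j ≠ i} => C (a i) * X j - C (a j.1))
      = Ideal.span (Set.range fun j => C (a i) * y j - C (a j)) := by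
    rw [← Ideal.span_range_subtype_ne (fun j => C (a i) * y j - C (a j)) (i := i) (by simp [y])]
    congr 2
    funext j
    simp [y, j.2]
  have ha : IsWeaklyRegular A (List.ofFn a) := by
    rwa [List.ofFn_eq_map, ← isRegularSequence_iff_isWeaklyRegular]
  have hai := isSMulRegular_quotient_span_algebraMap_mul_sub
    (S := MvPolynomial {j : Fin (r + 1) // j ≠ i} A) ha i (y := y) (by simp [y])
  rw [MvPolynomial.algebraMap_eq, ← hI] at hai
  rw [← Ideal.Quotient.algebraMap_eq, ← smul_eq_mul, algebraMap_smul] at hz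
  exact (hai.pow n).right_eq_zero_of_smul hz

open MvPolynomial in
theorem statement7 (A : Type) [CommRing A] [IsNoetherianRing A] [IsLocalRing A]
    (r : ℕ) (hr : 1 ≤ r) (a : Fin (r + 1) → A)
    (hreg : IsRegularSequence ((List.finRange (r + 1)).map a)) (i : Fin (r + 1))
    (n : ℕ) (hn : 1 ≤ n)
    (z : MvPolynomial {j : Fin (r + 1) // j ≠ i} A ⧸
      Ideal.span (Set.range fun j : {j : Fin (r + 1) // j ≠ i} =>
        C (a i) * X j - C (a j.1)))
    (hz : Ideal.Quotient.mk
        (Ideal.span (Set.range fun j : {j : Fin (r + 1) // j ≠ i} =>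
          C (a i) * X j - C (a j.1)))
        (C (a i) ^ n) * z = 0) :
    z = 0 :=
  statement7_general A r a hreg i n z hz
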